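/- Let 0 < α, β ≤ 1 with 1 < α + β ≤ 2, a < b, λ ∈ ℝ with |λ| < (α+β-1)Γ(α)Γ(β)/(b-a)^{α+β}. Then the only continuous function u : [a,b] → ℝ satisfying u(t) = λ ∫_a^b G(t,r) u(r) dr for all t ∈ [a,b] is u ≡ 0, where G(t,r) = (1/(Γ(α)Γ(β))) ∫_a^{min(t,r)} (t-s)^{β-1}(r-s)^{α-1} ds. -/

import Mathlib

/-!
Since `α, β ≤ 1`, the integrand of `G a α β t r` is dominated by `(min t r - s) ^ (α + β - 2)`,
which is integrable because `α + β > 1`; hence on the square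
`0 ≤ G ≤ (b - a) ^ (α + β - 1) / ((α + β - 1) Γ(α) Γ(β))`. Evaluating the integral equation at
a maximum point of `|u|` then gives
`max |u| ≤ |λ| (b - a) ^ (α + β) / ((α + β - 1) Γ(α) Γ(β)) · max |u|`, and the factor is `< 1`.
-/

open Real MeasureTheory Set

noncomputable def G (a α β t r : ℝ) : ℝ :=
  (1 / (Real.Gamma α * Real.Gamma β)) *
    ∫ s in a..(min t r), (t - s) ^ (β - 1) * (r - s) ^ (α - 1)

lemma Real.rpow_mul_rpow_le_rpow_add {x y z p q : ℝ} (hx : 0 < x) (hxy : x ≤ y) (hxz : x ≤ z)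
    (hp : p ≤ 0) (hq : q ≤ 0) : y ^ p * z ^ q ≤ x ^ (p + q) := by
  rw [Real.rpow_add hx]
  exact mul_le_mul (Real.rpow_le_rpow_of_nonpos hx hxy hp) (Real.rpow_le_rpow_of_nonpos hx hxz hq)
    (Real.rpow_nonneg (hx.le.trans hxz) _) (Real.rpow_nonneg hx.le _)

lemma integral_sub_rpow (a m : ℝ) {p : ℝ} (hp : -1 < p) :
    ∫ s in a..m, (m - s) ^ p = (m - a) ^ (p + 1) / (p + 1) := by
  rw [intervalIntegral.integral_comp_sub_left (· ^ p) m, sub_self, integral_rpow (Or.inl hp),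
    Real.zero_rpow (by linarith), sub_zero]

lemma intervalIntegrable_sub_rpow (a m : ℝ) {p : ℝ} (hp : -1 < p) :
    IntervalIntegrable (fun s => (m - s) ^ p) volume a m := by
  simpa using (intervalIntegral.intervalIntegrable_rpow' hp (a := m - a) (b := 0)).comp_sub_left m

section Kernel

variable {a α β t r : ℝ}

lemma G_nonneg (hα : 0 < α) (hβ : 0 < β) (hat : a ≤ t) (har : a ≤ r) : 0 ≤ G a α β t r := by
  have := Real.Gamma_pos_of_pos hα
  have := Real.Gamma_pos_of_pos hβ
  refine mul_nonneg (by positivity) (intervalIntegral.integral_nonneg (le_min hat har) ?_)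
  rintro s ⟨-, hs⟩
  exact mul_nonneg (Real.rpow_nonneg (by linarith [min_le_left t r]) _)
    (Real.rpow_nonneg (by linarith [min_le_right t r]) _)

lemma integral_kernel_le (hα1 : α ≤ 1) (hβ1 : β ≤ 1) (hs1 : 1 < α + β) (hat : a ≤ t)
    (har : a ≤ r) :
    ∫ s in a..(min t r), (t - s) ^ (β - 1) * (r - s) ^ (α - 1)
      ≤ (min t r - a) ^ (α + β - 1) / (α + β - 1) := by
  set m := min t r
  have hp : -1 < α + β - 2 := by linarith
  rw [show α + β - 1 = α + β - 2 + 1 by ring, ← integral_sub_rpow a m hp]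
  by_cases hint : IntervalIntegrable (fun s => (t - s) ^ (β - 1) * (r - s) ^ (α - 1)) volume a m
  · refine intervalIntegral.integral_mono_on_of_le_Ioo (le_min hat har) hint
      (intervalIntegrable_sub_rpow a m hp) fun s hs => ?_
    rw [show α + β - 2 = (β - 1) + (α - 1) by ring]
    exact Real.rpow_mul_rpow_le_rpow_add (by linarith [hs.2]) (by linarith [min_le_left t r])
      (by linarith [min_le_right t r]) (by linarith) (by linarith)
  · rw [intervalIntegral.integral_undef hint, integral_sub_rpow a m hp]
    exact div_nonneg (Real.rpow_nonneg (by linarith [le_min hat har]) _) (by linarith)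

lemma G_le {b : ℝ} (hα0 : 0 < α) (hα1 : α ≤ 1) (hβ0 : 0 < β) (hβ1 : β ≤ 1) (hs1 : 1 < α + β)
    (ht : t ∈ Icc a b) (hr : r ∈ Icc a b) :
    G a α β t r ≤ (b - a) ^ (α + β - 1) / ((α + β - 1) * Real.Gamma α * Real.Gamma β) := by
  have := Real.Gamma_pos_of_pos hα0
  have := Real.Gamma_pos_of_pos hβ0
  have hm : min t r - a ≤ b - a := by linarith [min_le_left t r, ht.2]
  calc G a α β t r
        ≤ 1 / (Real.Gamma α * Real.Gamma β) * ((b - a) ^ (α + β - 1) / (α + β - 1)) := by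
        refine mul_le_mul_of_nonneg_left ((integral_kernel_le hα1 hβ1 hs1 ht.1 hr.1).trans ?_)
          (by positivity)
        gcongr
        linarith [le_min ht.1 hr.1]
    _ = (b - a) ^ (α + β - 1) / ((α + β - 1) * Real.Gamma α * Real.Gamma β) := by
        field_simp

end Kernel

lemma eqOn_zero_of_eq_mul_integral {a b lam C : ℝ} {K : ℝ → ℝ → ℝ} {u : ℝ → ℝ} (hab : a ≤ b)
    (hu : ContinuousOn u (Icc a b)) (hK : ∀ t ∈ Icc a b, ∀ r ∈ Icc a b, |K t r| ≤ C)
    (hsmall : |lam| * C * (b - a) < 1)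
    (heq : ∀ t ∈ Icc a b, u t = lam * ∫ r in a..b, K t r * u r) :
    ∀ t ∈ Icc a b, u t = 0 := by
  obtain ⟨t₀, ht₀, hmax⟩ :=
    isCompact_Icc.exists_isMaxOn (nonempty_Icc.2 hab) hu.abs
  have hC : 0 ≤ C := (abs_nonneg _).trans (hK a (left_mem_Icc.2 hab) a (left_mem_Icc.2 hab))
  set M := |u t₀| with hM_def
  have hbound : ∀ r ∈ uIoc a b, ‖K t₀ r * u r‖ ≤ C * M := by
    intro r hr
    rw [uIoc_of_le hab] at hr
    have hrI : r ∈ Icc a b := Ioc_subset_Icc_self hr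
    rw [Real.norm_eq_abs, abs_mul]
    exact mul_le_mul (hK t₀ ht₀ r hrI) (hmax hrI) (abs_nonneg _) hC
  have hM : M ≤ |lam| * C * (b - a) * M := by
    calc M = |lam| * ‖∫ r in a..b, K t₀ r * u r‖ := by
          rw [hM_def, heq t₀ ht₀, abs_mul, Real.norm_eq_abs]
      _ ≤ |lam| * (C * M * |b - a|) :=
          mul_le_mul_of_nonneg_left (intervalIntegral.norm_integral_le_of_norm_le_const hbound)
            (abs_nonneg _)
      _ = |lam| * C * (b - a) * M := by rw [abs_of_nonneg (sub_nonneg.2 hab)]; ring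
  have hM0 : M = 0 := le_antisymm (by nlinarith [abs_nonneg (u t₀)]) (abs_nonneg _)
  intro t ht
  exact abs_nonpos_iff.1 ((hmax ht).trans hM0.le)

theorem stmt_13_general (a b α β lam : ℝ) (hα0 : 0 < α) (hα1 : α ≤ 1) (hβ0 : 0 < β) (hβ1 : β ≤ 1)
    (hs1 : 1 < α + β) (hab : a < b)
    (hlam : |lam| < (α + β - 1) * Real.Gamma α * Real.Gamma β / (b - a) ^ (α + β))
    (u : ℝ → ℝ) (hu : ContinuousOn u (Icc a b))
    (heq : ∀ t ∈ Icc a b, u t = lam * ∫ r in a..b, G a α β t r * u r) :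
    ∀ t ∈ Icc a b, u t = 0 := by
  have hP : 0 < (α + β - 1) * Real.Gamma α * Real.Gamma β := by
    have := Real.Gamma_pos_of_pos hα0
    have := Real.Gamma_pos_of_pos hβ0
    have : 0 < α + β - 1 := by linarith
    positivity
  have hba : 0 < b - a := by linarith
  refine eqOn_zero_of_eq_mul_integral
    (C := (b - a) ^ (α + β - 1) / ((α + β - 1) * Real.Gamma α * Real.Gamma β)) hab.le hu
    (fun t ht r hr => ?_) ?_ heq
  · rw [abs_of_nonneg (G_nonneg hα0 hβ0 ht.1 hr.1)]
    exact G_le hα0 hα1 hβ0 hβ1 hs1 ht hr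
  · rw [lt_div_iff₀ (Real.rpow_pos_of_pos hba _)] at hlam
    rw [mul_assoc, div_mul_eq_mul_div, ← Real.rpow_add_one hba.ne', sub_add_cancel,
      mul_div_assoc', div_lt_one hP]
    exact hlam

theorem stmt_13 (a b α β lam : ℝ) (hα0 : 0 < α) (hα1 : α ≤ 1) (hβ0 : 0 < β) (hβ1 : β ≤ 1)
    (hs1 : 1 < α + β) (hs2 : α + β ≤ 2) (hab : a < b)
    (hlam : |lam| < (α + β - 1) * Real.Gamma α * Real.Gamma β / (b - a) ^ (α + β))
    (u : ℝ → ℝ) (hu : ContinuousOn u (Icc a b))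
    (heq : ∀ t ∈ Icc a b, u t = lam * ∫ r in a..b, G a α β t r * u r) :
    ∀ t ∈ Icc a b, u t = 0 :=
  stmt_13_general a b α β lam hα0 hα1 hβ0 hβ1 hs1 hab hlam u hu heq
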